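/- arXiv:math/0408397 — 5 statements merged into one kernel-verified Lean document; each statement's English description precedes it below -/
import Mathlib

section
/- Let g(a,b,c,d) = (a-c)(ad-bc). Consider two skew lines ℓ₁, ℓ₂ in ℝ³ where ℓᵢ passes through the points (1, aᵢ, bᵢ) and (-1, cᵢ, dᵢ). If their projections to the xy-plane (forgetting the z-coordinate, i.e., projecting (x,y,z) ↦ (x,y)) meet at a point with x-coordinate determined by t₁ = (a₁-a₂)/((a₁-a₂)-(c₁-c₂)) (assuming (a₁-a₂) ≠ (c₁-c₂)), then the difference of z-coordinates of the two lines above that point equals ((a₁-a₂)(d₁-d₂)-(b₁-b₂)(c₁-c₂))/((a₁-a₂)-(c₁-c₂)). In particular, ℓ₁ passes over ℓ₂ (has larger z-coordinate at the crossing) if and only if g(a₁-a₂, b₁-b₂, c₁-c₂, d₁-d₂) > 0. -/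
/-- Crossing relation of two lines in ℝ³: line `ℓᵢ = {(1,aᵢ,bᵢ) + t(-2, cᵢ-aᵢ, dᵢ-bᵢ)}`.
At the common parameter `t = (a₁-a₂)/((a₁-a₂)-(c₁-c₂))` the two xy-projections meet,
the difference of z-coordinates is `((a₁-a₂)(d₁-d₂)-(b₁-b₂)(c₁-c₂))/((a₁-a₂)-(c₁-c₂))`,
and ℓ₁ passes over ℓ₂ iff `g(a₁-a₂,b₁-b₂,c₁-c₂,d₁-d₂) > 0` where `g(a,b,c,d) = (a-c)(ad-bc)`. -/
theorem stmt0 (a₁ b₁ c₁ d₁ a₂ b₂ c₂ d₂ t : ℝ)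
    (hden : (a₁ - a₂) - (c₁ - c₂) ≠ 0)
    (ht : t = (a₁ - a₂) / ((a₁ - a₂) - (c₁ - c₂))) :
    -- the xy-projections meet at parameter t
    (a₁ + t * (c₁ - a₁) = a₂ + t * (c₂ - a₂)) ∧
    -- difference of z-coordinates at the crossing point
    ((b₁ + t * (d₁ - b₁)) - (b₂ + t * (d₂ - b₂)) =
      ((a₁ - a₂) * (d₁ - d₂) - (b₁ - b₂) * (c₁ - c₂)) / ((a₁ - a₂) - (c₁ - c₂))) ∧
    -- ℓ₁ passes over ℓ₂ iff g of the differences is positive, g(a,b,c,d) = (a-c)(ad-bc)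
    ((b₂ + t * (d₂ - b₂) < b₁ + t * (d₁ - b₁)) ↔
      0 < ((a₁ - a₂) - (c₁ - c₂)) *
          ((a₁ - a₂) * (d₁ - d₂) - (b₁ - b₂) * (c₁ - c₂))) := by
  subst ht
  have h1 : a₁ + (a₁ - a₂) / ((a₁ - a₂) - (c₁ - c₂)) * (c₁ - a₁) =
      a₂ + (a₁ - a₂) / ((a₁ - a₂) - (c₁ - c₂)) * (c₂ - a₂) := by
    field_simp
    ring
  have h2 : (b₁ + (a₁ - a₂) / ((a₁ - a₂) - (c₁ - c₂)) * (d₁ - b₁)) -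
      (b₂ + (a₁ - a₂) / ((a₁ - a₂) - (c₁ - c₂)) * (d₂ - b₂)) =
      ((a₁ - a₂) * (d₁ - d₂) - (b₁ - b₂) * (c₁ - c₂)) / ((a₁ - a₂) - (c₁ - c₂)) := by
    field_simp
    ring
  refine ⟨h1, h2, ?_⟩
  rw [← sub_pos, h2, div_pos_iff]
  constructor
  · rintro (⟨hn, hd⟩ | ⟨hn, hd⟩)
    · exact mul_pos hd hn
    · exact mul_pos_of_neg_of_neg hd hn
  · intro h
    rcases hden.lt_or_gt with hd | hd
    · exact Or.inr ⟨neg_of_mul_pos_right h hd.le, hd⟩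
    · exact Or.inl ⟨by nlinarith, hd⟩
end

section
/- Let f(x,y) be an irreducible real polynomial in two variables such that there are infinitely many points (x,y) ∈ ℝ² with f(x,y) = 0 and x·∂f/∂x(x,y) + y·∂f/∂y(x,y) = 0. Then f(x,y) = ax + by for some real constants a, b. -/
open MvPolynomial

noncomputable def E1 : MvPolynomial (Fin 1) ℝ ≃ₐ[ℝ] Polynomial ℝ :=
  (MvPolynomial.finSuccEquiv ℝ 0).trans
    (Polynomial.mapAlgEquiv (MvPolynomial.isEmptyAlgEquiv ℝ (Fin 0)))

noncomputable def E2 : MvPolynomial (Fin 2) ℝ ≃ₐ[ℝ] Polynomial (Polynomial ℝ) :=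
  (MvPolynomial.finSuccEquiv ℝ 1).trans (Polynomial.mapAlgEquiv E1)

lemma E2_X0 : E2 (X 0) = Polynomial.X := by
  simp [E2, E1, MvPolynomial.finSuccEquiv_X_zero, Polynomial.mapAlgEquiv]

lemma E2_X1 : E2 (X 1) = Polynomial.C Polynomial.X := by
  have : (X 1 : MvPolynomial (Fin 2) ℝ) = X (Fin.succ 0) := rfl
  simp [E2, E1, this, MvPolynomial.finSuccEquiv_X_succ, Polynomial.mapAlgEquiv,
    MvPolynomial.finSuccEquiv_X_zero]

lemma E2_C (r : ℝ) : E2 (C r) = Polynomial.C (Polynomial.C r) := by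
  have h1 : (C r : MvPolynomial (Fin 2) ℝ) = algebraMap ℝ _ r := rfl
  rw [h1, AlgEquiv.commutes]
  rfl

lemma eval_E2 (v : Fin 2 → ℝ) (p : MvPolynomial (Fin 2) ℝ) :
    eval v p = ((E2 p).map (Polynomial.evalRingHom (v 1))).eval (v 0) := by
  have : (MvPolynomial.eval v) =
      ((Polynomial.evalRingHom (v 0)).comp
        ((Polynomial.mapRingHom (Polynomial.evalRingHom (v 1))).comp
          (E2 : MvPolynomial (Fin 2) ℝ →+* Polynomial (Polynomial ℝ)))) := by
    apply MvPolynomial.ringHom_ext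
    · intro r
      simp [E2_C]
    · intro i
      fin_cases i <;> simp [E2_X0, E2_X1]
  rw [this]; rfl

lemma keyA (p q : Polynomial (Polynomial ℝ)) (hp : Irreducible p) (hnd : ¬ p ∣ q) :
    ∃ r : Polynomial ℝ, r ≠ 0 ∧ ∀ a b : ℝ,
      (p.map (Polynomial.evalRingHom b)).eval a = 0 →
      (q.map (Polynomial.evalRingHom b)).eval a = 0 → r.eval b = 0 := by
  classical
  by_cases hdeg : p.natDegree = 0
  · obtain ⟨c, rfl⟩ := Polynomial.natDegree_eq_zero.mp hdeg
    refine ⟨c, fun hc => hp.ne_zero (by rw [hc, map_zero]), fun a b h1 _ => ?_⟩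
    simpa using h1
  · set K := FractionRing (Polynomial ℝ)
    set φ : Polynomial ℝ →+* K := algebraMap (Polynomial ℝ) K with hφ
    have hφinj : Function.Injective φ := IsFractionRing.injective _ _
    have hprim : p.IsPrimitive := by
      intro r hr
      rcases hr with ⟨t, ht⟩
      rcases hp.isUnit_or_isUnit ht with h | h
      · exact Polynomial.isUnit_C.mp h
      · exfalso
        apply hdeg
        have h0 : t.natDegree = 0 := Polynomial.natDegree_eq_zero_of_isUnit h
        have := Polynomial.natDegree_mul_le (p := Polynomial.C r) (q := t)
        rw [← ht] at this
        simpa [h0] using this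
    have hpk : Irreducible (p.map φ) :=
      (hprim.irreducible_iff_irreducible_map_fraction_map (K := K)).mp hp
    have hq0 : q ≠ 0 := fun h => hnd (h ▸ dvd_zero p)
    have hndk : ¬ p.map φ ∣ q.map φ := by
      intro hdvd
      have h1 : q.map φ = Polynomial.C (φ q.content) * (q.primPart.map φ) := by
        conv_lhs => rw [q.eq_C_content_mul_primPart]
        rw [Polynomial.map_mul, Polynomial.map_C]
      have hcne : φ q.content ≠ 0 := fun hc =>
        hq0 (Polynomial.content_eq_zero_iff.mp (hφinj (by simpa using hc)))
      have hcu : IsUnit (Polynomial.C (φ q.content)) :=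
        Polynomial.isUnit_C.mpr hcne.isUnit
      rw [h1] at hdvd
      have h2 : p.map φ ∣ q.primPart.map φ := (hcu.dvd_mul_left).mp hdvd
      have h3 := hprim.dvd_of_fraction_map_dvd_fraction_map (K := K)
        h2
      exact hnd (h3.trans q.primPart_dvd)
    have hco : IsCoprime (p.map φ) (q.map φ) :=
      (EuclideanDomain.dvd_or_coprime _ _ hpk).resolve_left hndk
    obtain ⟨a, b, hab⟩ := hco
    obtain ⟨s, hs⟩ := IsLocalization.integerNormalization_map_to_map
      (nonZeroDivisors (Polynomial ℝ)) a
    obtain ⟨t, ht⟩ := IsLocalization.integerNormalization_map_to_map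
      (nonZeroDivisors (Polynomial ℝ)) b
    set A := IsLocalization.integerNormalization (nonZeroDivisors (Polynomial ℝ)) a with hA
    set B := IsLocalization.integerNormalization (nonZeroDivisors (Polynomial ℝ)) b with hB
    have hsne : (s : Polynomial ℝ) ≠ 0 := nonZeroDivisors.ne_zero s.2
    have htne : (t : Polynomial ℝ) ≠ 0 := nonZeroDivisors.ne_zero t.2
    refine ⟨(s : Polynomial ℝ) * t, mul_ne_zero hsne htne, ?_⟩
    have key : Polynomial.C ((t : Polynomial ℝ)) * (A * p)
        + Polynomial.C ((s : Polynomial ℝ)) * (B * q)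
        = Polynomial.C ((s : Polynomial ℝ) * t) := by
      apply Polynomial.map_injective φ hφinj
      have hsmul : ∀ (u : Polynomial K) (d : Polynomial ℝ),
          (d : Polynomial ℝ) • u = Polynomial.C (φ d) * u := by
        intro u d
        rw [← Polynomial.smul_eq_C_mul, algebraMap_smul]
      rw [Polynomial.map_add, Polynomial.map_mul, Polynomial.map_mul, Polynomial.map_mul,
        Polynomial.map_mul, Polynomial.map_C, Polynomial.map_C, hs, ht,
        hsmul a s, hsmul b t, Polynomial.map_C, map_mul, Polynomial.C_mul]
      linear_combination (Polynomial.C (φ ↑t) * Polynomial.C (φ ↑s)) * hab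
    intro x y h1 h2
    have := congrArg (fun u => ((u.map (Polynomial.evalRingHom y)).eval x)) key
    simpa [Polynomial.eval_map, h1, h2, Polynomial.eval₂_mul, Polynomial.eval₂_add] using this

lemma E2_dvd_iff (p q : MvPolynomial (Fin 2) ℝ) : E2 p ∣ E2 q ↔ p ∣ q :=
  ⟨fun ⟨w, hw⟩ => ⟨E2.symm w, by
      apply E2.injective; rw [map_mul, hw, AlgEquiv.apply_symm_apply]⟩,
    fun h => map_dvd E2.toAlgHom.toRingHom h⟩

lemma halfBound (p q : MvPolynomial (Fin 2) ℝ) (hp : Irreducible p) (hnd : ¬ p ∣ q) :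
    ∃ r : Polynomial ℝ, r ≠ 0 ∧ ∀ v : Fin 2 → ℝ,
      eval v p = 0 → eval v q = 0 → r.eval (v 1) = 0 := by
  have hpk : Irreducible (E2 p) := (MulEquiv.irreducible_iff E2.toMulEquiv).mpr hp
  have hndk : ¬ E2 p ∣ E2 q := fun hh => hnd ((E2_dvd_iff p q).mp hh)
  obtain ⟨r, hr0, hr⟩ := keyA (E2 p) (E2 q) hpk hndk
  refine ⟨r, hr0, fun v h1 h2 => ?_⟩
  exact hr (v 0) (v 1) (by rw [← eval_E2]; exact h1) (by rw [← eval_E2]; exact h2)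

lemma bezout (p q : MvPolynomial (Fin 2) ℝ) (hp : Irreducible p) (hnd : ¬ p ∣ q) :
    {v : Fin 2 → ℝ | eval v p = 0 ∧ eval v q = 0}.Finite := by
  classical
  obtain ⟨r1, hr10, hr1⟩ := halfBound p q hp hnd
  set sw : MvPolynomial (Fin 2) ℝ ≃ₐ[ℝ] MvPolynomial (Fin 2) ℝ :=
    MvPolynomial.renameEquiv ℝ (Equiv.swap (0 : Fin 2) 1) with hsw
  have hsw_irr : Irreducible (sw p) := (MulEquiv.irreducible_iff sw.toMulEquiv).mpr hp
  have hsw_nd : ¬ sw p ∣ sw q := by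
    intro ⟨w, hw⟩
    exact hnd ⟨sw.symm w, by apply sw.injective; rw [map_mul, hw, AlgEquiv.apply_symm_apply]⟩
  obtain ⟨r2, hr20, hr2⟩ := halfBound (sw p) (sw q) hsw_irr hsw_nd
  apply Set.Finite.subset
    (Set.Finite.pi (t := fun i : Fin 2 => if i = 0 then {x | r2.IsRoot x} else {x | r1.IsRoot x})
      (fun i => by
        by_cases hi : i = 0
        · simp only [hi, if_pos]; exact Polynomial.finite_setOf_isRoot hr20
        · simp only [if_neg hi]; exact Polynomial.finite_setOf_isRoot hr10))
  intro v hv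
  obtain ⟨h1, h2⟩ := hv
  have hv1 : r1.eval (v 1) = 0 := hr1 v h1 h2
  have hv0 : r2.eval (v 0) = 0 := by
    have e1 : eval (v ∘ Equiv.swap (0 : Fin 2) 1) (sw p) = 0 := by
      rw [hsw]
      simp only [MvPolynomial.renameEquiv_apply, MvPolynomial.eval_rename]
      have : (v ∘ ⇑(Equiv.swap (0 : Fin 2) 1)) ∘ ⇑(Equiv.swap (0 : Fin 2) 1) = v := by
        funext i; simp [Function.comp, Equiv.swap_apply_self]
      rw [this]; exact h1
    have e2 : eval (v ∘ Equiv.swap (0 : Fin 2) 1) (sw q) = 0 := by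
      rw [hsw]
      simp only [MvPolynomial.renameEquiv_apply, MvPolynomial.eval_rename]
      have : (v ∘ ⇑(Equiv.swap (0 : Fin 2) 1)) ∘ ⇑(Equiv.swap (0 : Fin 2) 1) = v := by
        funext i; simp [Function.comp, Equiv.swap_apply_self]
      rw [this]; exact h2
    have := hr2 (v ∘ Equiv.swap (0 : Fin 2) 1) e1 e2
    simpa using this
  intro i _
  fin_cases i
  · simpa [Polynomial.IsRoot] using hv0
  · simpa [Polynomial.IsRoot] using hv1

lemma coeff_X_mul_pderiv (i : Fin 2) (f : MvPolynomial (Fin 2) ℝ) (m : Fin 2 →₀ ℕ) :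
    coeff m (X i * pderiv i f) = (m i : ℝ) * coeff m f := by
  classical
  induction f using MvPolynomial.induction_on' with
  | monomial s a =>
    rw [pderiv_monomial, MvPolynomial.coeff_X_mul']
    by_cases hmi : i ∈ m.support
    · rw [if_pos hmi, MvPolynomial.coeff_monomial, MvPolynomial.coeff_monomial]
      have hmi1 : 1 ≤ m i := Nat.one_le_iff_ne_zero.mpr (Finsupp.mem_support_iff.mp hmi)
      by_cases hsm : s = m
      · subst hsm
        rw [if_pos rfl, if_pos rfl, mul_comm]
      · rw [if_neg hsm]
        by_cases hs : s - Finsupp.single i 1 = m - Finsupp.single i 1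
        · rw [if_pos hs]
          have hsi : s i = 0 := by
            by_contra hsi0
            apply hsm
            ext j
            have hj := DFunLike.congr_fun hs j
            rw [Finsupp.tsub_apply, Finsupp.tsub_apply] at hj
            by_cases hji : j = i
            · subst hji
              simp only [Finsupp.single_eq_same] at hj
              omega
            · simpa [Finsupp.single_apply, Ne.symm hji] using hj
          simp [hsi]
        · rw [if_neg hs, mul_zero]
    · rw [if_neg hmi]
      have : m i = 0 := by
        by_contra hh
        exact hmi (Finsupp.mem_support_iff.mpr hh)
      rw [this]
      simp
  | add p q hp hq =>
    rw [map_add, mul_add, MvPolynomial.coeff_add, MvPolynomial.coeff_add, hp, hq, mul_add]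

lemma natDegree_E2 (p : MvPolynomial (Fin 2) ℝ) : (E2 p).natDegree = degreeOf 0 p := by
  have h1 : E2 p = (MvPolynomial.finSuccEquiv ℝ 1 p).map
      (E1 : MvPolynomial (Fin 1) ℝ →+* Polynomial ℝ) := rfl
  rw [h1, Polynomial.natDegree_map_eq_of_injective E1.injective,
    MvPolynomial.natDegree_finSuccEquiv]

lemma g_const {f g h : MvPolynomial (Fin 2) ℝ} (hne : f ≠ 0) (hg : g ≠ 0)
    (hsub0 : degreeOf 0 h ≤ degreeOf 0 f) (hsub1 : degreeOf 1 h ≤ degreeOf 1 f)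
    (hfg : h = f * g) : ∃ c : ℝ, g = MvPolynomial.C c := by
  classical
  have key : ∀ (F G H : MvPolynomial (Fin 2) ℝ), F ≠ 0 → G ≠ 0 → H = F * G →
      degreeOf 0 H ≤ degreeOf 0 F → degreeOf 0 G = 0 := by
    intro F G H hF hG hH hle
    have hE : E2 H = E2 F * E2 G := by rw [hH, map_mul]
    have hEF : E2 F ≠ 0 := fun hc => hF (by simpa using E2.injective (hc.trans (map_zero E2).symm))
    have hEG : E2 G ≠ 0 := fun hc => hG (by simpa using E2.injective (hc.trans (map_zero E2).symm))
    have := Polynomial.natDegree_mul hEF hEG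
    rw [← hE, natDegree_E2, natDegree_E2, natDegree_E2] at this
    omega
  have h0 : degreeOf 0 g = 0 := key f g h hne hg hfg hsub0
  set sw := MvPolynomial.renameEquiv ℝ (Equiv.swap (0 : Fin 2) 1) with hswdef
  have hdsw : ∀ p : MvPolynomial (Fin 2) ℝ, degreeOf 0 (sw p) = degreeOf 1 p := by
    intro p
    have := MvPolynomial.degreeOf_rename_of_injective
      (p := p) (Equiv.swap (0 : Fin 2) 1).injective 1
    simpa [hswdef, Equiv.swap_apply_right] using this
  have h1 : degreeOf 1 g = 0 := by
    have hswne : sw f ≠ 0 := fun hc => hne (by simpa using sw.injective (hc.trans (map_zero sw).symm))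
    have hswg : sw g ≠ 0 := fun hc => hg (by simpa using sw.injective (hc.trans (map_zero sw).symm))
    have := key (sw f) (sw g) (sw h) hswne hswg (by rw [hfg, map_mul])
      (by rw [hdsw, hdsw]; exact hsub1)
    rwa [hdsw] at this
  refine ⟨MvPolynomial.coeff 0 g, ?_⟩
  have hm : ∀ m ∈ g.support, m = (0 : Fin 2 →₀ ℕ) := by
    intro m hmem
    have hb0 : m 0 ≤ degreeOf 0 g := by
      rw [MvPolynomial.degreeOf_eq_sup]
      exact Finset.le_sup (f := fun m => m 0) hmem
    have hb1 : m 1 ≤ degreeOf 1 g := by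
      rw [MvPolynomial.degreeOf_eq_sup]
      exact Finset.le_sup (f := fun m => m 1) hmem
    rw [h0] at hb0
    rw [h1] at hb1
    ext j
    fin_cases j <;> simpa using by omega
  apply MvPolynomial.ext
  intro m
  by_cases hm0 : m = 0
  · subst hm0; simp
  · have hz : MvPolynomial.coeff m g = 0 := by
      by_contra hc
      exact hm0 (hm m (MvPolynomial.mem_support_iff.mpr hc))
    rw [hz, MvPolynomial.coeff_C, if_neg (fun hh => hm0 hh.symm)]

lemma irred_linear_poly {R : Type*} [CommRing R] [IsDomain R] {p : Polynomial R}
    (h1 : p.natDegree = 1) (h2 : IsUnit p.leadingCoeff) : Irreducible p := by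
  have hp0 : p ≠ 0 := fun hc => by simp [hc] at h1
  constructor
  · exact Polynomial.not_isUnit_of_natDegree_pos p (by omega)
  · intro u w huw
    have hu0 : u ≠ 0 := fun hc => hp0 (by rw [huw, hc, zero_mul])
    have hw0 : w ≠ 0 := fun hc => hp0 (by rw [huw, hc, mul_zero])
    have hdeg : u.natDegree + w.natDegree = 1 := by
      rw [← Polynomial.natDegree_mul hu0 hw0, ← huw, h1]
    have hlc : p.leadingCoeff = u.leadingCoeff * w.leadingCoeff := by
      rw [huw, Polynomial.leadingCoeff_mul]
    rcases Nat.eq_zero_or_pos u.natDegree with hud | hud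
    · left
      obtain ⟨r, hr⟩ := Polynomial.natDegree_eq_zero.mp hud
      have hrlc : u.leadingCoeff = r := by rw [← hr]; simp
      have : IsUnit u.leadingCoeff :=
        isUnit_of_mul_isUnit_left (by rw [← hlc]; exact h2)
      rw [← hr]
      exact Polynomial.isUnit_C.mpr (hrlc ▸ this)
    · right
      have hwd : w.natDegree = 0 := by omega
      obtain ⟨r, hr⟩ := Polynomial.natDegree_eq_zero.mp hwd
      have hrlc : w.leadingCoeff = r := by rw [← hr]; simp
      have : IsUnit w.leadingCoeff :=
        isUnit_of_mul_isUnit_right (by rw [← hlc]; exact h2)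
      rw [← hr]
      exact Polynomial.isUnit_C.mpr (hrlc ▸ this)

lemma lin_irred (a b : ℝ) (hb : b ≠ 0) :
    Irreducible (MvPolynomial.C b * X 0 + MvPolynomial.C a * X 1 : MvPolynomial (Fin 2) ℝ) := by
  apply (MulEquiv.irreducible_iff E2.toMulEquiv).mp
  show Irreducible (E2 (MvPolynomial.C b * X 0 + MvPolynomial.C a * X 1))
  have hE : E2 (MvPolynomial.C b * X 0 + MvPolynomial.C a * X 1)
      = Polynomial.C (Polynomial.C b) * Polynomial.X
        + Polynomial.C (Polynomial.C a * Polynomial.X) := by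
    rw [map_add, map_mul, map_mul, E2_C, E2_C, E2_X0, E2_X1, ← Polynomial.C_mul]
  rw [hE]
  have hCb : (Polynomial.C b : Polynomial ℝ) ≠ 0 := by simpa using hb
  apply irred_linear_poly
  · exact Polynomial.natDegree_linear hCb
  · rw [Polynomial.leadingCoeff_linear hCb]
    exact Polynomial.isUnit_C.mpr hb.isUnit

lemma lin_irred' (a b : ℝ) (hb : b ≠ 0) :
    Irreducible (MvPolynomial.C a * X 0 + MvPolynomial.C b * X 1 : MvPolynomial (Fin 2) ℝ) := by
  set sw := MvPolynomial.renameEquiv ℝ (Equiv.swap (0 : Fin 2) 1) with hswdef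
  have h1 := (MulEquiv.irreducible_iff sw.toMulEquiv).mpr (lin_irred a b hb)
  have h2 : sw.toMulEquiv (MvPolynomial.C b * X 0 + MvPolynomial.C a * X 1)
      = MvPolynomial.C a * X 0 + MvPolynomial.C b * X 1 := by
    show sw (MvPolynomial.C b * X 0 + MvPolynomial.C a * X 1) = _
    rw [hswdef]
    simp [MvPolynomial.renameEquiv_apply, Equiv.swap_apply_left, Equiv.swap_apply_right, add_comm]
  rwa [h2] at h1

lemma eval_smul_homog {f : MvPolynomial (Fin 2) ℝ} {d : ℕ}
    (hd : ∀ m ∈ f.support, m 0 + m 1 = d) (t : ℝ) (v : Fin 2 → ℝ) :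
    eval (t • v) f = t ^ d * eval v f := by
  rw [MvPolynomial.eval_eq', MvPolynomial.eval_eq', Finset.mul_sum]
  apply Finset.sum_congr rfl
  intro m hm
  have hprod : (∏ i, (t • v) i ^ m i) = t ^ d * ∏ i, v i ^ m i := by
    rw [Fin.prod_univ_two, Fin.prod_univ_two]
    simp only [Pi.smul_apply, smul_eq_mul]
    rw [mul_pow, mul_pow, ← hd m hm, pow_add]
    ring
  rw [hprod]
  ring

/-- An irreducible real polynomial `f(x,y)` with infinitely many common real zeros of
`f` and `x·∂f/∂x + y·∂f/∂y` must be of the form `ax + by`. -/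
theorem stmt9 (f : MvPolynomial (Fin 2) ℝ) (hf : Irreducible f)
    (h : {v : Fin 2 → ℝ |
      eval v f = 0 ∧
      eval v (X 0 * pderiv 0 f + X 1 * pderiv 1 f) = 0}.Infinite) :
    ∃ a b : ℝ, f = C a * X 0 + C b * X 1 := by
  classical
  set hE : MvPolynomial (Fin 2) ℝ := X 0 * pderiv 0 f + X 1 * pderiv 1 f with hEdef
  have hcoeff : ∀ m : Fin 2 →₀ ℕ,
      MvPolynomial.coeff m hE = ((m 0 : ℝ) + m 1) * MvPolynomial.coeff m f := by
    intro m
    rw [hEdef, MvPolynomial.coeff_add, coeff_X_mul_pderiv, coeff_X_mul_pderiv, add_mul]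
  have hne : f ≠ 0 := hf.ne_zero
  have hdvd : f ∣ hE := by
    by_contra hnd
    exact h (bezout f hE hf hnd)
  obtain ⟨g, hg⟩ := hdvd
  have hcex : ∃ c : ℝ, hE = f * MvPolynomial.C c := by
    by_cases hg0 : g = 0
    · exact ⟨0, by rw [hg, hg0]; simp⟩
    · have hs : hE.support ⊆ f.support := by
        intro m hm
        rw [MvPolynomial.mem_support_iff] at hm ⊢
        intro hc0
        exact hm (by rw [hcoeff, hc0, mul_zero])
      have hsupp : ∀ i : Fin 2, degreeOf i hE ≤ degreeOf i f := by
        intro i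
        rw [MvPolynomial.degreeOf_eq_sup, MvPolynomial.degreeOf_eq_sup]
        exact Finset.sup_mono hs
      obtain ⟨c, hcc⟩ := g_const hne hg0 (hsupp 0) (hsupp 1) hg
      exact ⟨c, by rw [hg, hcc]⟩
  obtain ⟨c, hc⟩ := hcex
  have hmc : ∀ m ∈ f.support, ((m 0 : ℝ) + m 1) = c := by
    intro m hm
    have h3 : MvPolynomial.coeff m f ≠ 0 := MvPolynomial.mem_support_iff.mp hm
    have h12 : ((m 0 : ℝ) + m 1) * MvPolynomial.coeff m f = c * MvPolynomial.coeff m f := by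
      rw [← hcoeff, hc, mul_comm f, MvPolynomial.coeff_C_mul, mul_comm c]
    exact mul_right_cancel₀ h3 h12
  obtain ⟨m₀, hm₀⟩ := MvPolynomial.support_nonempty.mpr hne
  set d := m₀ 0 + m₀ 1 with hddef
  have hdm : ∀ m ∈ f.support, m 0 + m 1 = d := by
    intro m hm
    have hcast : ((m 0 : ℝ) + m 1) = ((m₀ 0 : ℝ) + m₀ 1) := (hmc m hm).trans (hmc m₀ hm₀).symm
    exact_mod_cast hcast
  have hd1 : d ≠ 0 := by
    intro hd0
    apply hf.not_isUnit
    have hall : ∀ m ∈ f.support, m = (0 : Fin 2 →₀ ℕ) := by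
      intro m hm
      have := hdm m hm
      rw [hd0] at this
      ext j
      fin_cases j <;> simpa using by omega
    have hfC : f = MvPolynomial.C (MvPolynomial.coeff 0 f) := by
      apply MvPolynomial.ext
      intro m
      by_cases hm0 : m = 0
      · subst hm0; simp
      · have hz : MvPolynomial.coeff m f = 0 := by
          by_contra hcc
          exact hm0 (hall m (MvPolynomial.mem_support_iff.mpr hcc))
        rw [hz, MvPolynomial.coeff_C, if_neg (fun hh => hm0 hh.symm)]
    have hc0 : MvPolynomial.coeff 0 f ≠ 0 := by
      intro hcc
      exact hne (by rw [hfC, hcc, map_zero])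
    rw [hfC]
    exact hc0.isUnit.map (MvPolynomial.C : ℝ →+* MvPolynomial (Fin 2) ℝ)
  have hZ : {v : Fin 2 → ℝ | eval v f = 0}.Infinite := h.mono (fun v hv => hv.1)
  obtain ⟨v, hvz, hv0'⟩ := (hZ.diff (Set.finite_singleton 0)).nonempty
  have hvne : v ≠ 0 := by simpa using hv0'
  have hvz' : eval v f = 0 := hvz
  obtain ⟨i, hi⟩ := Function.ne_iff.mp hvne
  set L : MvPolynomial (Fin 2) ℝ :=
    MvPolynomial.C (v 1) * X 0 + MvPolynomial.C (-(v 0)) * X 1 with hLdef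
  have hlirr : Irreducible L := by
    by_cases hv1 : v 1 = 0
    · have hv00 : -(v 0) ≠ 0 := by
        simp only [neg_ne_zero]
        intro hv00
        apply hvne
        funext j
        fin_cases j
        · exact hv00
        · exact hv1
      exact lin_irred' (v 1) (-(v 0)) hv00
    · exact lin_irred (-(v 0)) (v 1) hv1
  have hcom : {w : Fin 2 → ℝ | eval w L = 0 ∧ eval w f = 0}.Infinite := by
    apply Set.infinite_of_injective_forall_mem (f := fun t : ℝ => t • v)
    · intro t s hts
      have := congrFun hts i
      simp only [Pi.smul_apply, smul_eq_mul] at this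
      exact mul_right_cancel₀ (by simpa using hi) this
    · intro t
      constructor
      · rw [hLdef]
        simp only [map_add, map_mul, MvPolynomial.eval_C, MvPolynomial.eval_X, Pi.smul_apply,
          smul_eq_mul]
        ring
      · rw [eval_smul_homog hdm t v, hvz', mul_zero]
  have hldvd : L ∣ f := by
    by_contra hnd
    exact hcom (bezout L f hlirr hnd)
  obtain ⟨u, hu⟩ := hldvd
  have hun : IsUnit u := (hf.isUnit_or_isUnit hu).resolve_left hlirr.not_isUnit
  have hE2u : IsUnit (E2 u) := hun.map E2
  obtain ⟨w, hwu, hw⟩ := Polynomial.isUnit_iff.mp hE2u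
  obtain ⟨r, _, hr⟩ := Polynomial.isUnit_iff.mp hwu
  have hu' : u = MvPolynomial.C r := by
    apply E2.injective
    rw [E2_C, hr, hw]
  refine ⟨v 1 * r, -(v 0) * r, ?_⟩
  rw [hu, hu', hLdef, MvPolynomial.C_mul, MvPolynomial.C_mul]
  ring
end

section
/- Let f(x,y) be an irreducible real polynomial in two variables such that there are infinitely many points (x,y) ∈ ℝ² with f(x,y) = 0 and x·∂f/∂y(x,y) - y·∂f/∂x(x,y) = 0, and such that f⁻¹(ℝ⁺) ≠ ∅. Then f(x,y) = a(x² + y²) + b for some real constants a, b. -/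
open MvPolynomial

open Real nonZeroDivisors

private lemma veta (v : Fin 2 → ℝ) : ![v 0, v 1] = v := by
  funext i; fin_cases i <;> rfl

private lemma symmC_eval (d : MvPolynomial (Fin 1) ℝ) (v : Fin 2 → ℝ) :
    eval v ((finSuccEquiv ℝ 1).symm (Polynomial.C d)) = eval (fun _ => v 1) d := by
  have h : (finSuccEquiv ℝ 1).symm (Polynomial.C d) = rename Fin.succ d := by
    apply (finSuccEquiv ℝ 1).injective
    rw [AlgEquiv.apply_symm_apply]
    induction d using MvPolynomial.induction_on with
    | C a => simp [finSuccEquiv_apply]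
    | add p q hp hq => simp [map_add, hp, hq]
    | mul_X p i hp => simp [map_mul, ← hp, finSuccEquiv_X_succ]
  have h2 : v ∘ Fin.succ = fun _ : Fin 1 => v 1 := by funext i; fin_cases i; rfl
  rw [h, eval_rename, h2]

private lemma fin1_finite {p : MvPolynomial (Fin 1) ℝ} (hp : p ≠ 0) :
    {t : ℝ | eval (fun _ => t) p = 0}.Finite := by
  set s : Fin 0 → ℝ := fun i => i.elim0 with hs
  set P : Polynomial ℝ := (finSuccEquiv ℝ 0 p).map (eval s) with hP
  have heval : ∀ q : MvPolynomial (Fin 0) ℝ, q = C (eval s q) := by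
    intro q
    obtain ⟨c, rfl⟩ := MvPolynomial.C_surjective (Fin 0) q
    simp
  have hPne : P ≠ 0 := by
    intro h0
    apply hp
    apply (finSuccEquiv ℝ 0).injective
    rw [map_zero]
    ext n
    have := congrArg (fun q => Polynomial.coeff q n) h0
    simp only [Polynomial.coeff_zero] at this
    rw [hP, Polynomial.coeff_map] at this
    rw [Polynomial.coeff_zero, heval ((finSuccEquiv ℝ 0 p).coeff n), this, map_zero]
  apply (Polynomial.finite_setOf_isRoot hPne).subset
  intro t ht
  have hc : (fun _ : Fin 1 => t) = Fin.cons t s := by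
    funext i; fin_cases i; rfl
  simp only [Set.mem_setOf_eq] at ht
  rw [hc, eval_eq_eval_mv_eval'] at ht
  exact ht

private lemma isUnit_fin1 {u : MvPolynomial (Fin 1) ℝ} (hu : IsUnit u) : ∃ c : ℝ, u = C c := by
  have h1 : IsUnit (finSuccEquiv ℝ 0 u) := hu.map _
  obtain ⟨r, -, hr⟩ := Polynomial.isUnit_iff.mp h1
  obtain ⟨c, rfl⟩ := MvPolynomial.C_surjective (Fin 0) r
  refine ⟨c, ?_⟩
  apply (finSuccEquiv ℝ 0).injective
  rw [← hr]
  simp [finSuccEquiv_apply]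

private lemma isUnit_fin2 {w : MvPolynomial (Fin 2) ℝ} (hw : IsUnit w) : ∃ c : ℝ, w = C c := by
  have h1 : IsUnit (finSuccEquiv ℝ 1 w) := hw.map _
  obtain ⟨r, hr_unit, hr⟩ := Polynomial.isUnit_iff.mp h1
  obtain ⟨c, rfl⟩ := isUnit_fin1 hr_unit
  refine ⟨c, ?_⟩
  apply (finSuccEquiv ℝ 1).injective
  rw [← hr]
  simp [finSuccEquiv_apply]

private lemma hasDerivAt_circle (r : ℝ) (g : MvPolynomial (Fin 2) ℝ) (θ : ℝ) :
    HasDerivAt (fun t => eval ![r * Real.cos t, r * Real.sin t] g)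
      (eval ![r * Real.cos θ, r * Real.sin θ] (X 0 * pderiv 1 g - X 1 * pderiv 0 g)) θ := by
  induction g using MvPolynomial.induction_on with
  | C a =>
      simp only [pderiv_C, mul_zero, sub_zero, eval_C]
      simpa using hasDerivAt_const θ (a : ℝ)
  | add p q hp hq =>
      have := hp.fun_add hq
      simpa [map_add, mul_add, add_sub_add_comm] using this
  | mul_X p i hp =>
      fin_cases i
      · have hc : HasDerivAt (fun t => r * Real.cos t) (-(r * Real.sin θ)) θ := by
          simpa [mul_comm, neg_mul, mul_neg] using (Real.hasDerivAt_cos θ).const_mul r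
        have := hp.fun_mul hc
        convert this using 2 with t
        · rfl
        · rfl
        · simp [eval_mul]
        · simp only [Fin.mk_zero, Fin.mk_one, pderiv_mul, pderiv_X_self,
            pderiv_X_of_ne (by decide : (0:Fin 2) ≠ 1), pderiv_X_of_ne (by decide : (1:Fin 2) ≠ 0),
            mul_one, mul_zero, add_zero, map_add, map_sub, eval_mul, eval_add, eval_X, map_one,
            Matrix.cons_val_zero, Matrix.cons_val_one, Matrix.head_cons]
          ring
      · have hc : HasDerivAt (fun t => r * Real.sin t) (r * Real.cos θ) θ := by
          simpa [mul_comm] using (Real.hasDerivAt_sin θ).const_mul r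
        have := hp.fun_mul hc
        convert this using 2 with t
        · rfl
        · rfl
        · simp [eval_mul]
        · simp only [Fin.mk_zero, Fin.mk_one, pderiv_mul, pderiv_X_self,
            pderiv_X_of_ne (by decide : (0:Fin 2) ≠ 1), pderiv_X_of_ne (by decide : (1:Fin 2) ≠ 0),
            mul_one, mul_zero, add_zero, map_add, map_sub, eval_mul, eval_add, eval_X, map_one,
            Matrix.cons_val_zero, Matrix.cons_val_one, Matrix.head_cons]
          ring
-- polar: writing a nonzero point in polar coordinates
private lemma polar {x y ρ : ℝ} (hρ : 0 < ρ) (hxy : x ^ 2 + y ^ 2 = ρ) :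
    ∃ θ : ℝ, Real.sqrt ρ * Real.cos θ = x ∧ Real.sqrt ρ * Real.sin θ = y := by
  have hz : (Complex.I * y + x) ≠ 0 := by
    intro h0
    have hx : x = 0 := by
      have := congrArg Complex.re h0; simpa using this
    have hy : y = 0 := by
      have := congrArg Complex.im h0; simpa using this
    rw [hx, hy] at hxy; norm_num at hxy; exact hρ.ne' hxy.symm
  set z : ℂ := Complex.I * y + x with hzdef
  have habs : ‖z‖ = Real.sqrt ρ := by
    rw [Complex.norm_def, Complex.normSq_apply]
    congr 1
    simp [hzdef, ← hxy]
    ring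
  have habs0 : ‖z‖ ≠ 0 := by
    rw [habs]; positivity
  refine ⟨Complex.arg z, ?_, ?_⟩
  · rw [Complex.cos_arg hz, ← habs]
    field_simp
    simp [hzdef]
  · rw [Complex.sin_arg, ← habs]
    field_simp
    simp [hzdef]
private lemma vanish_circle {f u : MvPolynomial (Fin 2) ℝ}
    (hu : X 0 * pderiv 1 f - X 1 * pderiv 0 f = f * u) {r : ℝ}
    {θ₀ : ℝ} (h0 : eval ![r * Real.cos θ₀, r * Real.sin θ₀] f = 0) (θ₁ : ℝ) :
    eval ![r * Real.cos θ₁, r * Real.sin θ₁] f = 0 := by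
  set φ : ℝ → ℝ := fun t => eval ![r * Real.cos t, r * Real.sin t] f with hφ
  set ψ : ℝ → ℝ := fun t => eval ![r * Real.cos t, r * Real.sin t] u with hψ
  have hφ' : ∀ t, HasDerivAt φ (ψ t * φ t) t := by
    intro t
    have := hasDerivAt_circle r f t
    rw [hu] at this
    simpa [eval_mul, mul_comm] using this
  have hψc : Continuous ψ := by
    have : Differentiable ℝ ψ := fun t => by
      have h2 := hasDerivAt_circle r u t
      exact h2.differentiableAt
    exact this.continuous
  set Ψ : ℝ → ℝ := fun t => ∫ s in (0:ℝ)..t, ψ s with hΨdef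
  have hΨ : ∀ t, HasDerivAt Ψ (ψ t) t := by
    intro t
    exact intervalIntegral.integral_hasDerivAt_right (hψc.intervalIntegrable 0 t)
      (hψc.stronglyMeasurableAtFilter _ _) hψc.continuousAt
  set Q : ℝ → ℝ := fun t => φ t * Real.exp (-Ψ t) with hQ
  have hQ' : ∀ t, HasDerivAt Q 0 t := by
    intro t
    have := (hφ' t).fun_mul (((hΨ t).fun_neg).exp)
    convert this using 1
    · rfl
    · rfl
    ring
  have hconst : ∀ a b : ℝ, Q a = Q b :=
    is_const_of_deriv_eq_zero (fun t => (hQ' t).differentiableAt)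
      (fun t => (hQ' t).deriv)
  have h1 : Q θ₁ = 0 := by
    rw [hconst θ₁ θ₀]
    simp [hQ, hφ, h0]
  have := mul_eq_zero.mp h1
  rcases this with h | h
  · exact h
  · exact absurd h (Real.exp_ne_zero _)
private lemma eval_via_poly (f : MvPolynomial (Fin 2) ℝ) (v : Fin 2 → ℝ) :
    eval v f = Polynomial.eval (v 0)
      ((finSuccEquiv ℝ 1 f).map (eval (fun _ : Fin 1 => v 1))) := by
  have h1 : v = Fin.cons (v 0) (fun _ : Fin 1 => v 1) := by
    funext i; fin_cases i <;> rfl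
  conv_lhs => rw [h1]
  rw [eval_eq_eval_mv_eval']

private lemma finSuccEquiv_circle (ρ : ℝ) :
    finSuccEquiv ℝ 1 (X 0 ^ 2 + X 1 ^ 2 - C ρ) =
      Polynomial.X ^ 2 + Polynomial.C (X 0 ^ 2 - C ρ) := by
  rw [show (1 : Fin 2) = Fin.succ 0 from rfl]
  have hC : finSuccEquiv ℝ 1 (C ρ) = Polynomial.C (C ρ) := by
    rw [finSuccEquiv_apply, eval₂Hom_C]; rfl
  rw [map_sub, map_add, map_pow, map_pow, finSuccEquiv_X_zero, finSuccEquiv_X_succ, hC,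
    ← Polynomial.C_pow, add_sub_assoc, ← Polynomial.C_sub]

private lemma circle_dvd {f : MvPolynomial (Fin 2) ℝ} {ρ : ℝ} (hρ : 0 < ρ)
    (hvan : ∀ x y : ℝ, x ^ 2 + y ^ 2 = ρ → eval ![x, y] f = 0) :
    (X 0 ^ 2 + X 1 ^ 2 - C ρ) ∣ f := by
  set F := finSuccEquiv ℝ 1 f with hF
  set P : Polynomial (MvPolynomial (Fin 1) ℝ) :=
    Polynomial.X ^ 2 + Polynomial.C (X 0 ^ 2 - C ρ) with hPdef
  have hmonic : P.Monic :=
    Polynomial.monic_X_pow_add (lt_of_le_of_lt Polynomial.degree_C_le (by norm_num))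
  have hPdeg : P.degree = 2 := by
    rw [hPdef]
    exact Polynomial.degree_X_pow_add_C (by norm_num) _
  set R := F %ₘ P with hR
  have hRdeg : R.degree ≤ 1 := by
    have h2 := Polynomial.degree_modByMonic_lt F hmonic
    rw [hPdeg] at h2
    rcases hd : R.degree with _ | n
    · exact bot_le
    · rw [← hR, hd] at h2
      rw [show (some n : WithBot ℕ) = (n : WithBot ℕ) from rfl] at h2 ⊢
      have hn : n < 2 := by exact_mod_cast h2
      have hn1 : n ≤ 1 := by omega
      exact_mod_cast hn1
  -- decomposition f = (circle poly) * q' + r'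
  have hsymmP : (finSuccEquiv ℝ 1).symm P = X 0 ^ 2 + X 1 ^ 2 - C ρ := by
    rw [hPdef, ← finSuccEquiv_circle ρ, AlgEquiv.symm_apply_apply]
  have hdecomp : f = (X 0 ^ 2 + X 1 ^ 2 - C ρ) * (finSuccEquiv ℝ 1).symm (F /ₘ P)
      + (finSuccEquiv ℝ 1).symm R := by
    have hFP : F = P * (F /ₘ P) + R := by
      rw [hR, add_comm]; exact (Polynomial.modByMonic_add_div F P).symm
    have h4 : (finSuccEquiv ℝ 1).symm F = f := AlgEquiv.symm_apply_apply _ f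
    calc f = (finSuccEquiv ℝ 1).symm (P * (F /ₘ P) + R) := by rw [← hFP, h4]
    _ = _ := by rw [map_add, map_mul, hsymmP]
  -- R as linear polynomial
  have hRlin : R = Polynomial.C (R.coeff 1) * Polynomial.X + Polynomial.C (R.coeff 0) :=
    Polynomial.eq_X_add_C_of_degree_le_one hRdeg
  -- evaluate on circle
  have hkey : ∀ x y : ℝ, x ^ 2 + y ^ 2 = ρ →
      eval (fun _ : Fin 1 => y) (R.coeff 1) * x + eval (fun _ : Fin 1 => y) (R.coeff 0) = 0 := by
    intro x y hxy
    have h0 := hvan x y hxy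
    rw [hdecomp] at h0
    have hcirc : eval ![x, y] (X 0 ^ 2 + X 1 ^ 2 - C ρ) = 0 := by
      simp only [map_sub, map_add, map_pow, eval_X, eval_C, Matrix.cons_val_zero,
        Matrix.cons_val_one, Matrix.head_cons]
      rw [hxy]; ring
    rw [map_add, map_mul, hcirc, zero_mul, zero_add] at h0
    rw [hRlin] at h0
    simp only [map_add, map_mul] at h0
    have e1 : eval ![x, y] ((finSuccEquiv ℝ 1).symm (Polynomial.C (R.coeff 1))) =
        eval (fun _ : Fin 1 => y) (R.coeff 1) := by
      have := symmC_eval (R.coeff 1) ![x, y]; simpa using this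
    have e0 : eval ![x, y] ((finSuccEquiv ℝ 1).symm (Polynomial.C (R.coeff 0))) =
        eval (fun _ : Fin 1 => y) (R.coeff 0) := by
      have := symmC_eval (R.coeff 0) ![x, y]; simpa using this
    have eX : eval ![x, y] ((finSuccEquiv ℝ 1).symm Polynomial.X) = x := by
      have : (finSuccEquiv ℝ 1).symm Polynomial.X = X 0 := by
        apply (finSuccEquiv ℝ 1).injective; rw [AlgEquiv.apply_symm_apply]; exact (finSuccEquiv_X_zero).symm
      rw [this]; simp
    rw [e1, e0, eX] at h0
    exact h0
  -- coefficients vanish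
  have hvan1 : ∀ y : ℝ, y ^ 2 < ρ → eval (fun _ : Fin 1 => y) (R.coeff 1) = 0 ∧
      eval (fun _ : Fin 1 => y) (R.coeff 0) = 0 := by
    intro y hy
    set x := Real.sqrt (ρ - y ^ 2) with hx
    have hx2 : x ^ 2 + y ^ 2 = ρ := by
      rw [hx, Real.sq_sqrt (by linarith)]; ring
    have hxpos : 0 < x := Real.sqrt_pos.mpr (by linarith)
    have h1 := hkey x y hx2
    have h2 := hkey (-x) y (by rw [neg_pow]; simpa using hx2)
    constructor
    · nlinarith [h1, h2]
    · nlinarith [h1, h2]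
  have hc1 : R.coeff 1 = 0 := by
    by_contra hne
    have hfin := fin1_finite hne
    have : Set.Infinite {t : ℝ | eval (fun _ : Fin 1 => t) (R.coeff 1) = 0} := by
      apply Set.Infinite.mono (s := Set.Ioo 0 (Real.sqrt ρ))
      · intro y hy
        have : y ^ 2 < ρ := by
          have h1 : (0:ℝ) ≤ y := le_of_lt hy.1
          have := (Real.lt_sqrt h1).mp hy.2
          exact this
        exact (hvan1 y this).1
      · exact Set.Ioo_infinite (Real.sqrt_pos.mpr hρ)
    exact this hfin
  have hc0 : R.coeff 0 = 0 := by
    by_contra hne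
    have hfin := fin1_finite hne
    have : Set.Infinite {t : ℝ | eval (fun _ : Fin 1 => t) (R.coeff 0) = 0} := by
      apply Set.Infinite.mono (s := Set.Ioo 0 (Real.sqrt ρ))
      · intro y hy
        have : y ^ 2 < ρ := (Real.lt_sqrt (le_of_lt hy.1)).mp hy.2
        exact (hvan1 y this).2
      · exact Set.Ioo_infinite (Real.sqrt_pos.mpr hρ)
    exact this hfin
  have hR0 : R = 0 := by rw [hRlin, hc1, hc0]; simp
  refine ⟨(finSuccEquiv ℝ 1).symm (F /ₘ P), ?_⟩
  rw [hdecomp, hR0, map_zero, add_zero]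
private lemma finite_snd (f g : MvPolynomial (Fin 2) ℝ) (hf : Irreducible f)
    (hdvd : ¬ f ∣ g) :
    ∃ s : Set ℝ, s.Finite ∧ ∀ v : Fin 2 → ℝ, eval v f = 0 → eval v g = 0 → v 1 ∈ s := by
  classical
  set A := MvPolynomial (Fin 1) ℝ
  set F := finSuccEquiv ℝ 1 f with hF
  set G := finSuccEquiv ℝ 1 g with hG
  by_cases hdeg : F.natDegree = 0
  · -- f is a polynomial in the second variable only
    have hFC : F = Polynomial.C (F.coeff 0) := Polynomial.eq_C_of_natDegree_eq_zero hdeg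
    have hfne : F.coeff 0 ≠ 0 := by
      intro h0
      apply hf.ne_zero
      apply (finSuccEquiv ℝ 1).injective
      rw [← hF, hFC, h0, map_zero, map_zero]
    refine ⟨{t : ℝ | eval (fun _ : Fin 1 => t) (F.coeff 0) = 0}, fin1_finite hfne, ?_⟩
    intro v hv _
    have hfe : f = (finSuccEquiv ℝ 1).symm (Polynomial.C (F.coeff 0)) := by
      rw [← hFC, hF, AlgEquiv.symm_apply_apply]
    rw [hfe, symmC_eval] at hv
    exact hv
  · -- positive degree case : Bézout over the fraction field
    set K := FractionRing A
    have hFirr : Irreducible F := by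
      rw [hF]
      exact (MulEquiv.irreducible_iff (finSuccEquiv ℝ 1)).mpr hf
    have hGF : ¬ F ∣ G := by
      intro ⟨w, hw⟩
      apply hdvd
      refine ⟨(finSuccEquiv ℝ 1).symm w, ?_⟩
      apply (finSuccEquiv ℝ 1).injective
      rw [map_mul, ← hF, ← hG, AlgEquiv.apply_symm_apply, hw]
    have hprim : F.IsPrimitive := by
      intro c hc
      obtain ⟨w, hw⟩ := hc
      rcases hFirr.isUnit_or_isUnit hw with h1 | h1
      · exact Polynomial.isUnit_C.mp h1
      · exfalso
        obtain ⟨r, -, hr⟩ := Polynomial.isUnit_iff.mp h1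
        apply hdeg
        rw [hw, ← hr, ← Polynomial.C_mul, Polynomial.natDegree_C]
    letI : NormalizationMonoid A := UniqueFactorizationMonoid.normalizationMonoid.toNormalizationMonoid
    letI : NormalizedGCDMonoid A := UniqueFactorizationMonoid.toNormalizedGCDMonoid A
    have hinj : Function.Injective (algebraMap A K) := IsFractionRing.injective A K
    have hmapinj : Function.Injective
        (Polynomial.map (algebraMap A K) : Polynomial A → Polynomial K) :=
      Polynomial.map_injective _ hinj
    have hFKirr : Irreducible (F.map (algebraMap A K)) :=
      (hprim.irreducible_iff_irreducible_map_fraction_map (K := K)).mp hFirr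
    have hFprime : Prime F := UniqueFactorizationMonoid.irreducible_iff_prime.mp hFirr
    have hKdvd : ¬ F.map (algebraMap A K) ∣ G.map (algebraMap A K) := by
      intro ⟨Q, hQ⟩
      obtain ⟨d, hd⟩ := IsLocalization.integerNormalization_map_to_map A⁰ Q
      set Q' := IsLocalization.integerNormalization A⁰ Q with hQ'
      have hmain : Polynomial.C (d : A) * G = F * Q' := by
        apply hmapinj
        rw [Polynomial.map_mul, Polynomial.map_mul, hd, Polynomial.map_C, hQ]
        rw [Algebra.smul_def, Polynomial.algebraMap_apply]
        ring
      rcases (hFprime.2.2 (Polynomial.C (d : A)) G ⟨Q', by rw [hmain]⟩) with h1 | h1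
      · have hd0 : (d : A) ≠ 0 := nonZeroDivisors.coe_ne_zero d
        have := Polynomial.natDegree_le_of_dvd h1 (by simpa using hd0)
        rw [Polynomial.natDegree_C] at this
        omega
      · exact hGF h1
    have hcop : IsCoprime (F.map (algebraMap A K)) (G.map (algebraMap A K)) :=
      (hFKirr.coprime_iff_not_dvd).mpr hKdvd
    obtain ⟨a, b, hab⟩ := hcop
    obtain ⟨da, hda⟩ := IsLocalization.integerNormalization_map_to_map A⁰ a
    obtain ⟨db, hdb⟩ := IsLocalization.integerNormalization_map_to_map A⁰ b
    set a' := IsLocalization.integerNormalization A⁰ a with ha'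
    set b' := IsLocalization.integerNormalization A⁰ b with hb'
    set D : A := (da : A) * (db : A) with hD
    have hD0 : D ≠ 0 :=
      mul_ne_zero (nonZeroDivisors.coe_ne_zero da) (nonZeroDivisors.coe_ne_zero db)
    have hkey : (Polynomial.C (db : A) * a') * F + (Polynomial.C (da : A) * b') * G
        = Polynomial.C D := by
      apply hmapinj
      rw [Polynomial.map_add, Polynomial.map_mul, Polynomial.map_mul, Polynomial.map_mul,
        Polynomial.map_mul, Polynomial.map_C, Polynomial.map_C, Polynomial.map_C,
        hda, hdb, Algebra.smul_def, Algebra.smul_def, Polynomial.algebraMap_apply,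
        Polynomial.algebraMap_apply, hD, map_mul, Polynomial.C_mul]
      calc Polynomial.C ((algebraMap A K) ↑db) * (Polynomial.C ((algebraMap A K) ↑da) * a) *
            Polynomial.map (algebraMap A K) F +
          Polynomial.C ((algebraMap A K) ↑da) * (Polynomial.C ((algebraMap A K) ↑db) * b) *
            Polynomial.map (algebraMap A K) G
          = Polynomial.C ((algebraMap A K) ↑da) * Polynomial.C ((algebraMap A K) ↑db) *
            (a * Polynomial.map (algebraMap A K) F + b * Polynomial.map (algebraMap A K) G) := by
            ring
        _ = _ := by rw [hab, mul_one]
    refine ⟨{t : ℝ | eval (fun _ : Fin 1 => t) D = 0}, fin1_finite hD0, ?_⟩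
    intro v hvf hvg
    have := congrArg (fun q => eval v ((finSuccEquiv ℝ 1).symm q)) hkey
    simp only [map_add, map_mul] at this
    rw [hF, hG, AlgEquiv.symm_apply_apply, AlgEquiv.symm_apply_apply] at this
    rw [hvf, hvg, mul_zero, mul_zero, add_zero, symmC_eval] at this
    exact this.symm

/-- An irreducible real polynomial `f(x,y)` with infinitely many common real zeros of
`f` and `x·∂f/∂y - y·∂f/∂x`, taking a positive value somewhere, must be of the form
`a(x² + y²) + b`. -/
theorem stmt10 (f : MvPolynomial (Fin 2) ℝ) (hf : Irreducible f)
    (h : {v : Fin 2 → ℝ |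
      eval v f = 0 ∧
      eval v (X 0 * pderiv 1 f - X 1 * pderiv 0 f) = 0}.Infinite)
    (hpos : ∃ v : Fin 2 → ℝ, 0 < eval v f) :
    ∃ a b : ℝ, f = C a * (X 0 ^ 2 + X 1 ^ 2) + C b := by
  classical
  by_cases hdvd : f ∣ (X 0 * pderiv 1 f - X 1 * pderiv 0 f)
  · obtain ⟨u, hu⟩ := hdvd
    obtain ⟨v, hvZ, hv0⟩ := (h.diff (Set.finite_singleton 0)).nonempty
    simp only [Set.mem_diff, Set.mem_singleton_iff] at hv0
    set ρ := v 0 ^ 2 + v 1 ^ 2 with hρdef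
    have hρ : 0 < ρ := by
      rcases (by positivity : (0:ℝ) ≤ ρ).lt_or_eq with hlt | heq
      · exact hlt
      · exfalso
        apply hv0
        have h00 : v 0 = 0 := by nlinarith [sq_nonneg (v 0), sq_nonneg (v 1)]
        have h11 : v 1 = 0 := by nlinarith [sq_nonneg (v 0), sq_nonneg (v 1)]
        funext i; fin_cases i <;> simp [h00, h11]
    have hvan : ∀ x y : ℝ, x ^ 2 + y ^ 2 = ρ → eval ![x, y] f = 0 := by
      intro x y hxy
      obtain ⟨θ₀, hc0, hs0⟩ := polar hρ hρdef.symm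
      obtain ⟨θ₁, hc1, hs1⟩ := polar hρ hxy
      have h00 : eval ![Real.sqrt ρ * Real.cos θ₀, Real.sqrt ρ * Real.sin θ₀] f = 0 := by
        rw [hc0, hs0, veta]
        exact hvZ.1
      have := vanish_circle hu h00 θ₁
      rwa [hc1, hs1] at this
    obtain ⟨w, hw⟩ := circle_dvd hρ hvan
    have hnu : ¬ IsUnit (X 0 ^ 2 + X 1 ^ 2 - C ρ : MvPolynomial (Fin 2) ℝ) := by
      intro hun
      obtain ⟨q, hq⟩ := isUnit_iff_exists_inv.mp hun
      have h2 := congrArg (eval ![Real.sqrt ρ, 0]) hq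
      simp only [map_mul, map_sub, map_add, map_pow, eval_X, eval_C, map_one,
        Matrix.cons_val_zero, Matrix.cons_val_one, Matrix.head_cons] at h2
      rw [Real.sq_sqrt hρ.le] at h2
      simp at h2
    rcases hf.isUnit_or_isUnit hw with h1 | h1
    · exact absurd h1 hnu
    · obtain ⟨c, rfl⟩ := isUnit_fin2 h1
      refine ⟨c, -(c * ρ), ?_⟩
      rw [hw, map_neg, map_mul]
      ring
  · exfalso
    obtain ⟨s2, hs2fin, hs2⟩ := finite_snd f _ hf hdvd
    set σe : Equiv.Perm (Fin 2) := Equiv.swap 0 1 with hσe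
    set f' := rename ⇑σe f with hf'def
    set g' := rename ⇑σe (X 0 * pderiv 1 f - X 1 * pderiv 0 f) with hg'def
    have hswap : ∀ p : MvPolynomial (Fin 2) ℝ, rename ⇑σe.symm (rename ⇑σe p) = p := by
      intro p
      rw [rename_rename]
      have : (⇑σe.symm ∘ ⇑σe) = id := by funext i; simp [hσe]
      rw [this, rename_id, AlgHom.id_apply]
    have hfirr' : Irreducible f' := by
      have : f' = renameEquiv ℝ σe f := rfl
      rw [this]
      exact (MulEquiv.irreducible_iff (renameEquiv ℝ σe)).mpr hf
    have hdvd' : ¬ f' ∣ g' := by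
      rintro ⟨w, hw⟩
      apply hdvd
      refine ⟨rename ⇑σe.symm w, ?_⟩
      have := congrArg (rename ⇑σe.symm) hw
      rw [map_mul, hswap, hswap] at this
      exact this
    obtain ⟨s1, hs1fin, hs1⟩ := finite_snd f' g' hfirr' hdvd'
    have hmem : ∀ v : Fin 2 → ℝ, eval v f = 0 →
        eval v (X 0 * pderiv 1 f - X 1 * pderiv 0 f) = 0 → v 0 ∈ s1 ∧ v 1 ∈ s2 := by
      intro v hvf hvg
      refine ⟨?_, hs2 v hvf hvg⟩
      have h1 : eval (v ∘ ⇑σe) f' = 0 := by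
        rw [hf'def, eval_rename]
        have : (v ∘ ⇑σe) ∘ ⇑σe = v := by funext i; simp [hσe]
        rwa [this]
      have h2 : eval (v ∘ ⇑σe) g' = 0 := by
        rw [hg'def, eval_rename]
        have : (v ∘ ⇑σe) ∘ ⇑σe = v := by funext i; simp [hσe]
        rwa [this]
      have := hs1 (v ∘ ⇑σe) h1 h2
      simpa [hσe] using this
    apply h
    have himg : ((fun v : Fin 2 → ℝ => (v 0, v 1)) ''
        {v : Fin 2 → ℝ | eval v f = 0 ∧
          eval v (X 0 * pderiv 1 f - X 1 * pderiv 0 f) = 0}).Finite := by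
      apply (hs1fin.prod hs2fin).subset
      rintro ⟨x, y⟩ ⟨v, hv, heq⟩
      obtain ⟨h1, h2⟩ := hmem v hv.1 hv.2
      rw [← heq]
      exact ⟨h1, h2⟩
    apply Set.Finite.of_finite_image himg
    intro v _ w _ hvw
    simp only [Prod.mk.injEq] at hvw
    funext i; fin_cases i
    · exact hvw.1
    · exact hvw.2
end

section
/- For the matrix M_d from the operator x·∂/∂y - y·∂/∂x on degree-d homogeneous polynomials: if λ is an eigenvalue of M_d then so is -λ. Consequently, since the nullspace of M_d has dimension at most one (the last d columns of M_d are linearly independent), M_d is invertible when d is odd, and has nullity exactly 1 when d is even. -/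
/-- The `(d+1)×(d+1)` matrix of the operator `x·∂/∂y - y·∂/∂x` on homogeneous polynomials
of degree `d`: superdiagonal entries `1, 2, …, d`, subdiagonal entries `-d, …, -1`. -/
def Mmat (d : ℕ) : Matrix (Fin (d + 1)) (Fin (d + 1)) ℝ :=
  Matrix.of fun i j =>
    if (j : ℕ) = (i : ℕ) + 1 then ((i : ℕ) + 1 : ℝ)
    else if (i : ℕ) = (j : ℕ) + 1 then -((d : ℝ) - (j : ℕ))
    else 0


def Mgen (d : ℕ) (K : Type*) [Ring K] : Matrix (Fin (d + 1)) (Fin (d + 1)) K :=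
  Matrix.of fun i j =>
    if (j : ℕ) = (i : ℕ) + 1 then ((i : ℕ) + 1 : K)
    else if (i : ℕ) = (j : ℕ) + 1 then -((d : K) - (j : ℕ))
    else 0

noncomputable def padZ (d : ℕ) {K : Type*} [Ring K] (v : Fin (d + 1) → K) (n : ℤ) : K :=
  if h : 0 ≤ n ∧ n < (d : ℤ) + 1 then v ⟨n.toNat, by omega⟩ else 0

lemma padZ_coe (d : ℕ) {K : Type*} [Ring K] (v : Fin (d + 1) → K) (i : Fin (d + 1)) :
    padZ d v (i : ℕ) = v i := by
  have h : (0 : ℤ) ≤ (i : ℕ) ∧ ((i : ℕ) : ℤ) < (d : ℤ) + 1 := by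
    constructor <;> [positivity; exact_mod_cast Int.ofNat_lt.2 i.isLt]
  rw [padZ, dif_pos h]
  congr 1

lemma padZ_of_not (d : ℕ) {K : Type*} [Ring K] (v : Fin (d + 1) → K) {n : ℤ}
    (h : ¬(0 ≤ n ∧ n < (d : ℤ) + 1)) : padZ d v n = 0 := dif_neg h

lemma key (d : ℕ) {K : Type*} [Field K] (v : Fin (d + 1) → K) (i : Fin (d + 1)) :
    (Mgen d K).mulVec v i
      = ((i : ℕ) + 1 : K) * padZ d v ((i : ℕ) + 1)
        - ((d : K) + 1 - ((i : ℕ) : K)) * padZ d v ((i : ℕ) - 1) := by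
  have hsum : (Mgen d K).mulVec v i
      = (∑ j : Fin (d+1), if (j : ℕ) = (i : ℕ) + 1 then ((i : ℕ) + 1 : K) * v j else 0)
        + (∑ j : Fin (d+1), if (i : ℕ) = (j : ℕ) + 1 then -((d : K) - (j : ℕ)) * v j else 0) := by
    rw [Matrix.mulVec, ← Finset.sum_add_distrib]
    refine Finset.sum_congr rfl fun j _ => ?_
    simp only [Mgen, Matrix.of_apply, dotProduct]
    by_cases h1 : (j : ℕ) = (i : ℕ) + 1
    · rw [if_pos h1, if_pos h1, if_neg (by omega)]; ring
    · rw [if_neg h1, if_neg h1]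
      by_cases h2 : (i : ℕ) = (j : ℕ) + 1
      · rw [if_pos h2, if_pos h2]; ring
      · rw [if_neg h2, if_neg h2]; ring
  rw [hsum]
  have hS1 : (∑ j : Fin (d+1), if (j : ℕ) = (i : ℕ) + 1 then ((i : ℕ) + 1 : K) * v j else 0)
      = ((i : ℕ) + 1 : K) * padZ d v ((i : ℕ) + 1) := by
    by_cases h : (i : ℕ) < d
    · set j0 : Fin (d + 1) := ⟨(i : ℕ) + 1, by omega⟩ with hj0
      have hiff : ∀ j : Fin (d+1), ((j : ℕ) = (i : ℕ) + 1) ↔ (j = j0) := by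
        intro j; simp only [hj0, Fin.ext_iff]; try omega
      simp only [hiff]
      rw [Finset.sum_ite_eq' Finset.univ j0 (fun j => ((i : ℕ) + 1 : K) * v j),
        if_pos (Finset.mem_univ _)]
      have := padZ_coe d v j0
      have harg : ((j0 : ℕ) : ℤ) = ((i : ℕ) : ℤ) + 1 := by simp [hj0]
      rw [harg] at this
      rw [this]
    · have hz : padZ d v ((i : ℕ) + 1) = 0 := padZ_of_not d v (by omega)
      rw [hz, mul_zero]
      refine Finset.sum_eq_zero fun j _ => if_neg (by omega)
  have hS2 : (∑ j : Fin (d+1), if (i : ℕ) = (j : ℕ) + 1 then -((d : K) - (j : ℕ)) * v j else 0)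
      = -(((d : K) + 1 - ((i : ℕ) : K)) * padZ d v ((i : ℕ) - 1)) := by
    by_cases h : 1 ≤ (i : ℕ)
    · set j0 : Fin (d + 1) := ⟨(i : ℕ) - 1, by omega⟩ with hj0
      have hiff : ∀ j : Fin (d+1), ((i : ℕ) = (j : ℕ) + 1) ↔ (j = j0) := by
        intro j; simp only [hj0, Fin.ext_iff]; try omega
      simp only [hiff]
      rw [Finset.sum_ite_eq' Finset.univ j0 (fun j => -((d : K) - (j : ℕ)) * v j),
        if_pos (Finset.mem_univ _)]
      have hp := padZ_coe d v j0
      have harg : ((j0 : ℕ) : ℤ) = ((i : ℕ) : ℤ) - 1 := by simp only [hj0]; omega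
      rw [harg] at hp
      rw [hp]
      have hcast : ((j0 : ℕ) : K) = ((i : ℕ) : K) - 1 := by
        simp only [hj0]
        push_cast [Nat.cast_sub h]
        ring
      rw [hcast]; ring
    · have hz : padZ d v ((i : ℕ) - 1) = 0 := padZ_of_not d v (by omega)
      rw [hz, mul_zero, neg_zero]
      refine Finset.sum_eq_zero fun j _ => if_neg (by omega)
  rw [hS1, hS2]; ring

lemma eig_iff (d : ℕ) {K : Type*} [Field K] (c : K) (v : Fin (d + 1) → K) :
    (Mgen d K).mulVec v = c • v ↔
      ∀ n : ℤ, ((n : K) + 1) * padZ d v (n + 1) - ((d : K) + 1 - (n : K)) * padZ d v (n - 1)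
        = c * padZ d v n := by
  constructor
  · intro h n
    by_cases hn : 0 ≤ n ∧ n < (d : ℤ) + 1
    · set i : Fin (d + 1) := ⟨n.toNat, by omega⟩ with hi
      have hval : ((i : ℕ) : ℤ) = n := by simp only [hi]; omega
      have hKval : ((i : ℕ) : K) = (n : K) := by rw [← hval]; push_cast; ring
      have h1 := congrFun h i
      rw [key d v i, Pi.smul_apply, smul_eq_mul] at h1
      rw [← padZ_coe d v i, hval, hKval] at h1
      exact h1
    · rw [padZ_of_not d v hn, mul_zero]
      by_cases h1 : n = -1
      · subst h1
        rw [padZ_of_not d v (n := -1 - 1) (by norm_num)]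
        push_cast
        ring
      · by_cases h2 : n = (d : ℤ) + 1
        · subst h2
          rw [padZ_of_not d v (n := (d : ℤ) + 1 + 1) (by omega)]
          have : ((d : K) + 1 - (((d : ℤ) + 1 : ℤ) : K)) = 0 := by push_cast; ring
          rw [this]
          ring
        · rw [padZ_of_not d v (show ¬(0 ≤ n + 1 ∧ n + 1 < (d : ℤ) + 1) by omega),
            padZ_of_not d v (show ¬(0 ≤ n - 1 ∧ n - 1 < (d : ℤ) + 1) by omega)]
          ring
  · intro h
    funext i
    rw [key d v i, Pi.smul_apply, smul_eq_mul]
    have := h ((i : ℕ) : ℤ)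
    rw [padZ_coe d v i] at this
    have hKval : ((((i : ℕ) : ℤ)) : K) = ((i : ℕ) : K) := by push_cast; ring
    rw [hKval] at this
    exact this

lemma ker_rec (d : ℕ) (v : Fin (d + 1) → ℝ) (h : (Mgen d ℝ).mulVec v = 0) :
    ∀ n : ℤ, ((n : ℝ) + 1) * padZ d v (n + 1) = ((d : ℝ) + 1 - (n : ℝ)) * padZ d v (n - 1) := by
  have h' : (Mgen d ℝ).mulVec v = (0 : ℝ) • v := by rw [zero_smul]; exact h
  intro n
  have := (eig_iff d 0 v).1 h' n
  rw [zero_mul] at this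
  linarith

lemma ker_zero (d : ℕ) (v : Fin (d + 1) → ℝ) (h : (Mgen d ℝ).mulVec v = 0)
    (h0 : padZ d v 0 = 0) : v = 0 := by
  have hrec := ker_rec d v h
  have H : ∀ m : ℕ, padZ d v (m : ℤ) = 0 ∧ padZ d v ((m : ℤ) + 1) = 0 := by
    intro m
    induction m with
    | zero =>
      refine ⟨by exact_mod_cast h0, ?_⟩
      have := hrec 0
      rw [padZ_of_not d v (n := 0 - 1) (by norm_num)] at this
      norm_num at this
      exact_mod_cast this
    | succ m ih =>
      refine ⟨by exact_mod_cast ih.2, ?_⟩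
      have := hrec ((m : ℤ) + 1)
      have harg : ((m : ℤ) + 1 - 1) = (m : ℤ) := by ring
      rw [harg, ih.1, mul_zero] at this
      have hne : (((m : ℤ) + 1 : ℤ) : ℝ) + 1 ≠ 0 := by push_cast; positivity
      have := mul_eq_zero.1 this
      rcases this with h1 | h1
      · exact absurd h1 hne
      · exact_mod_cast h1
  funext i
  rw [← padZ_coe d v i]
  exact (H (i : ℕ)).1

lemma ker_even_chain (d : ℕ) (v : Fin (d + 1) → ℝ) (h : (Mgen d ℝ).mulVec v = 0) :
    ∀ k : ℕ, 2 * k ≤ d → padZ d v (2 * (k : ℤ)) = 0 → padZ d v 0 = 0 := by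
  have hrec := ker_rec d v h
  intro k
  induction k with
  | zero => intro _ h0; exact_mod_cast h0
  | succ k ih =>
    intro hle h0
    refine ih (by omega) ?_
    have := hrec (2 * (k : ℤ) + 1)
    have harg1 : (2 * (k : ℤ) + 1 + 1) = 2 * ((k : ℤ) + 1) := by ring
    have harg2 : (2 * (k : ℤ) + 1 - 1) = 2 * (k : ℤ) := by ring
    rw [harg1, harg2] at this
    have h0' : padZ d v (2 * ((k : ℤ) + 1)) = 0 := by exact_mod_cast h0
    rw [h0', mul_zero] at this
    have hcoeff : ((d : ℝ) + 1 - ((2 * (k : ℤ) + 1 : ℤ) : ℝ)) = ((d - 2 * k : ℕ) : ℝ) := by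
      rw [Nat.cast_sub (by omega)]
      push_cast
      ring
    rw [hcoeff] at this
    have hne : ((d - 2 * k : ℕ) : ℝ) ≠ 0 := by
      rw [Nat.cast_ne_zero]; omega
    rcases mul_eq_zero.1 this.symm with h1 | h1
    · exact absurd h1 hne
    · exact h1

lemma padZ_zero_eq (d : ℕ) {K : Type*} [Ring K] (v : Fin (d + 1) → K) :
    padZ d v 0 = v 0 := by
  have := padZ_coe d v 0
  simpa using this

lemma ker_le_one (d : ℕ) :
    Module.finrank ℝ (LinearMap.ker (Mgen d ℝ).mulVecLin) ≤ 1 := by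
  set S := LinearMap.ker (Mgen d ℝ).mulVecLin
  let f : S →ₗ[ℝ] ℝ := (LinearMap.proj (0 : Fin (d + 1))).comp S.subtype
  have hinj : Function.Injective f := by
    rw [← LinearMap.ker_eq_bot, LinearMap.ker_eq_bot']
    intro x hx
    have hm : (Mgen d ℝ).mulVec x.1 = 0 := by
      have := x.2
      rwa [LinearMap.mem_ker, Matrix.mulVecLin_apply] at this
    have h0 : padZ d x.1 0 = 0 := by
      rw [padZ_zero_eq]
      exact hx
    exact Subtype.ext (ker_zero d x.1 hm h0)
  calc Module.finrank ℝ S ≤ Module.finrank ℝ ℝ :=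
        LinearMap.finrank_le_finrank_of_injective hinj
    _ = 1 := Module.finrank_self ℝ

lemma odd_unit (d : ℕ) (hd : Odd d) : IsUnit (Mgen d ℝ) := by
  rw [← Matrix.mulVec_injective_iff_isUnit]
  rw [← Matrix.coe_mulVecLin, ← LinearMap.ker_eq_bot, LinearMap.ker_eq_bot']
  intro v hv
  rw [Matrix.mulVecLin_apply] at hv
  obtain ⟨k, hk⟩ := hd
  have hrec := ker_rec d v hv
  -- padZ v (d - 1) = 0 from row d
  have hd1 : padZ d v ((d : ℤ) - 1) = 0 := by
    have := hrec (d : ℤ)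
    rw [padZ_of_not d v (n := (d : ℤ) + 1) (by omega), mul_zero] at this
    have hco : ((d : ℝ) + 1 - (((d : ℤ)) : ℝ)) = 1 := by push_cast; ring
    rw [hco, one_mul] at this
    exact this.symm
  have h2k : padZ d v (2 * (k : ℤ)) = 0 := by
    have : (d : ℤ) - 1 = 2 * (k : ℤ) := by omega
    rwa [this] at hd1
  have h0 : padZ d v 0 = 0 := ker_even_chain d v hv k (by omega) h2k
  exact ker_zero d v hv h0

lemma padZ_nat (d : ℕ) {K : Type*} [Ring K] (v : Fin (d + 1) → K) (a : ℕ) (h : a ≤ d) :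
    padZ d v (a : ℤ) = v ⟨a, by omega⟩ := by
  rw [padZ, dif_pos (by constructor <;> omega)]
  congr 1

lemma even_ker (d : ℕ) (hd : Even d) :
    Module.finrank ℝ (LinearMap.ker (Mgen d ℝ).mulVecLin) = 1 := by
  obtain ⟨m, hm⟩ := hd
  set w : Fin (d + 1) → ℝ :=
    fun i => if Even (i : ℕ) then (Nat.choose m ((i : ℕ) / 2) : ℝ) else 0 with hw
  have hwval : ∀ (a : ℕ) (h : a ≤ d),
      w ⟨a, by omega⟩ = if Even a then (Nat.choose m (a / 2) : ℝ) else 0 := fun a h => rfl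
  have hodd : ∀ j : ℤ, Odd j → padZ d w j = 0 := by
    intro j hj
    obtain ⟨t, ht⟩ := hj
    by_cases h : 0 ≤ j ∧ j < (d : ℤ) + 1
    · have hja : j = ((j.toNat : ℕ) : ℤ) := by omega
      rw [hja, padZ_nat d w j.toNat (by omega), hwval _ (by omega)]
      refine if_neg ?_
      rintro ⟨s, hs⟩
      omega
    · exact padZ_of_not d w h
  have hker : (Mgen d ℝ).mulVec w = 0 := by
    have : (Mgen d ℝ).mulVec w = (0 : ℝ) • w := by
      rw [eig_iff]
      intro n
      rw [zero_mul]
      by_cases hrange : 0 ≤ n ∧ n ≤ (d : ℤ)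
      · by_cases hpar : Odd n
        · -- n odd: n = 2j+1
          have hn1 : 1 ≤ n := by obtain ⟨t, ht⟩ := hpar; omega
          obtain ⟨t, ht⟩ := hpar
          have ht0 : 0 ≤ t := by omega
          set j : ℕ := t.toNat with hj
          have hnj : n = 2 * (j : ℤ) + 1 := by omega
          have hjd : 2 * j + 2 ≤ d := by
            -- n odd ≤ d, d even
            omega
          have h1 : padZ d w (n + 1) = (Nat.choose m (j + 1) : ℝ) := by
            have harg : n + 1 = ((2 * j + 2 : ℕ) : ℤ) := by omega
            have hev : Even (2 * j + 2) := ⟨j + 1, by ring⟩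
            rw [harg, padZ_nat d w (2 * j + 2) hjd, hwval _ hjd, if_pos hev]
            congr 2
            omega
          have h2 : padZ d w (n - 1) = (Nat.choose m j : ℝ) := by
            have harg : n - 1 = ((2 * j : ℕ) : ℤ) := by omega
            have hev : Even (2 * j) := ⟨j, by ring⟩
            rw [harg, padZ_nat d w (2 * j) (by omega), hwval _ (by omega), if_pos hev]
            congr 2
            omega
          rw [h1, h2]
          have hid := Nat.choose_succ_right_eq m j
          have hjm : j < m := by omega
          have hcast : (Nat.choose m (j + 1) : ℝ) * ((j : ℝ) + 1)
              = (Nat.choose m j : ℝ) * ((m : ℝ) - (j : ℝ)) := by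
            have := congrArg (fun x : ℕ => (x : ℝ)) hid
            push_cast [Nat.cast_sub hjm.le] at this
            convert this using 2
          have hncast : ((n : ℤ) : ℝ) = 2 * (j : ℝ) + 1 := by
            rw [hnj]; push_cast; ring
          rw [hncast]
          have hdcast : (d : ℝ) = 2 * (m : ℝ) := by
            rw [hm]; push_cast; ring
          rw [hdcast]
          linear_combination 2 * hcast
        · -- n even: both neighbors odd
          rw [Int.not_odd_iff_even] at hpar
          obtain ⟨s, hs⟩ := hpar
          rw [hodd (n + 1) ⟨s, by omega⟩, hodd (n - 1) ⟨s - 1, by omega⟩]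
          ring
      · -- out of range
        by_cases h1 : n = -1
        · subst h1
          rw [padZ_of_not d w (n := -1 - 1) (by norm_num)]
          push_cast
          ring
        · by_cases h2 : n = (d : ℤ) + 1
          · subst h2
            rw [padZ_of_not d w (n := (d : ℤ) + 1 + 1) (by omega)]
            have : ((d : ℝ) + 1 - (((d : ℤ) + 1 : ℤ) : ℝ)) = 0 := by push_cast; ring
            rw [this]
            ring
          · rw [padZ_of_not d w (show ¬(0 ≤ n + 1 ∧ n + 1 < (d : ℤ) + 1) by omega),
              padZ_of_not d w (show ¬(0 ≤ n - 1 ∧ n - 1 < (d : ℤ) + 1) by omega)]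
            ring
    rw [this, zero_smul]
  have hwne : w ≠ 0 := by
    intro h0
    have : w 0 = 0 := by rw [h0]; rfl
    rw [hw] at this
    simp at this
  have hmem : w ∈ LinearMap.ker (Mgen d ℝ).mulVecLin := by
    rw [LinearMap.mem_ker, Matrix.mulVecLin_apply]
    exact hker
  have hpos : 0 < Module.finrank ℝ (LinearMap.ker (Mgen d ℝ).mulVecLin) := by
    rw [Module.finrank_pos_iff]
    exact nontrivial_of_ne ⟨w, hmem⟩ 0 (fun h => hwne (congrArg Subtype.val h))
  have hle := ker_le_one d
  omega

lemma eig_neg (d : ℕ) (c : ℂ) (v : Fin (d + 1) → ℂ) (hv : v ≠ 0)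
    (h : (Mgen d ℂ).mulVec v = c • v) :
    ∃ w : Fin (d + 1) → ℂ, w ≠ 0 ∧ (Mgen d ℂ).mulVec w = (-c) • w := by
  set w : Fin (d + 1) → ℂ := fun i => v ⟨d - (i : ℕ), by omega⟩ with hwdef
  have hpad : ∀ n : ℤ, padZ d w n = padZ d v ((d : ℤ) - n) := by
    intro n
    by_cases h : 0 ≤ n ∧ n < (d : ℤ) + 1
    · rw [padZ, dif_pos h, padZ, dif_pos (by constructor <;> omega)]
      have hr : ∀ (hh : n.toNat < d + 1),
          w ⟨n.toNat, hh⟩ = v ⟨d - n.toNat, by omega⟩ := fun _ => rfl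
      rw [hr (by omega)]
      apply congrArg
      apply Fin.ext
      show d - n.toNat = ((d : ℤ) - n).toNat
      omega
    · rw [padZ_of_not d w h, padZ_of_not d v (by omega)]
  refine ⟨w, ?_, ?_⟩
  · intro h0
    apply hv
    funext i
    have hr : v i = w ⟨d - (i : ℕ), by omega⟩ := by
      have : ∀ (hh : d - (i : ℕ) < d + 1),
          w ⟨d - (i : ℕ), hh⟩ = v ⟨d - (d - (i : ℕ)), by omega⟩ := fun _ => rfl
      rw [this (by omega)]
      apply congrArg
      apply Fin.ext
      show (i : ℕ) = d - (d - (i : ℕ))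
      omega
    rw [hr, h0]
    rfl
  · rw [eig_iff] at h ⊢
    intro n
    rw [hpad (n + 1), hpad (n - 1), hpad n]
    have h1 := h ((d : ℤ) - n)
    have e1 : (d : ℤ) - n + 1 = d - (n - 1) := by ring
    have e2 : (d : ℤ) - n - 1 = d - (n + 1) := by ring
    rw [e1, e2] at h1
    push_cast at h1 ⊢
    linear_combination -h1

lemma Mmat_eq (d : ℕ) : Mmat d = Mgen d ℝ := rfl

lemma Mmat_map (d : ℕ) : (Mmat d).map (Complex.ofReal : ℝ → ℂ) = Mgen d ℂ := by
  ext i j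
  simp only [Matrix.map_apply, Mmat, Mgen, Matrix.of_apply]
  split_ifs <;> push_cast <;> ring


/-- If `λ` is an eigenvalue of `M_d` then so is `-λ`; consequently (the nullspace having
dimension at most one) `M_d` is invertible when `d` is odd and has nullity exactly `1`
when `d` is even. -/
theorem stmt12 (d : ℕ) :
    (∀ c : ℂ,
      (∃ v : Fin (d + 1) → ℂ, v ≠ 0 ∧
        ((Mmat d).map (Complex.ofReal : ℝ → ℂ)).mulVec v = c • v) →
      (∃ w : Fin (d + 1) → ℂ, w ≠ 0 ∧
        ((Mmat d).map (Complex.ofReal : ℝ → ℂ)).mulVec w = (-c) • w)) ∧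
    Module.finrank ℝ (LinearMap.ker (Mmat d).mulVecLin) ≤ 1 ∧
    (Odd d → IsUnit (Mmat d)) ∧
    (Even d → Module.finrank ℝ (LinearMap.ker (Mmat d).mulVecLin) = 1) := by
  rw [Mmat_map, Mmat_eq]
  exact ⟨fun c ⟨v, hv, hev⟩ => eig_neg d c v hv hev, ker_le_one d,
    odd_unit d, even_ker d⟩
end

section
/- Let g : I → ℝ⁺ be a monotone function on an interval I ⊆ [0, 2π) of length at most π/2 contained in [0, π/2] (so all points are in the closed first quadrant). Then the set X = {λ g(θ)(cos θ, sin θ) : λ ≥ 1, θ ∈ I} ⊆ ℝ² is a semigroup: if x, y ∈ X then x + y ∈ X. -/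
open Real



lemma key16 (θ₁ θ₂ r₁ r₂ : ℝ) (h10 : 0 ≤ θ₁) (h2p : θ₂ ≤ π / 2) (hle : θ₁ ≤ θ₂)
    (hr1 : 0 < r₁) (hr2 : 0 < r₂) :
    ∃ φ r : ℝ, θ₁ ≤ φ ∧ φ ≤ θ₂ ∧ r₁ ≤ r ∧ r₂ ≤ r ∧
      r₁ * cos θ₁ + r₂ * cos θ₂ = r * cos φ ∧
      r₁ * sin θ₁ + r₂ * sin θ₂ = r * sin φ := by
  have hpi := Real.pi_pos
  have h20 : 0 ≤ θ₂ := le_trans h10 hle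
  have h1p : θ₁ ≤ π / 2 := le_trans hle h2p
  have hc1 : 0 ≤ cos θ₁ := Real.cos_nonneg_of_mem_Icc ⟨by linarith, h1p⟩
  have hc2 : 0 ≤ cos θ₂ := Real.cos_nonneg_of_mem_Icc ⟨by linarith, h2p⟩
  have hs1 : 0 ≤ sin θ₁ := Real.sin_nonneg_of_nonneg_of_le_pi h10 (by linarith)
  have hs2 : 0 ≤ sin θ₂ := Real.sin_nonneg_of_nonneg_of_le_pi h20 (by linarith)
  have hK : 0 ≤ cos θ₁ * cos θ₂ + sin θ₁ * sin θ₂ :=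
    add_nonneg (mul_nonneg hc1 hc2) (mul_nonneg hs1 hs2)
  obtain ⟨a, ha_def⟩ : ∃ x : ℝ, x = r₁ * cos θ₁ + r₂ * cos θ₂ := ⟨_, rfl⟩
  obtain ⟨b, hb_def⟩ : ∃ x : ℝ, x = r₁ * sin θ₁ + r₂ * sin θ₂ := ⟨_, rfl⟩
  have ha : 0 ≤ a := by rw [ha_def]; positivity
  have hb : 0 ≤ b := by rw [hb_def]; positivity
  have hp1 := Real.sin_sq_add_cos_sq θ₁
  have hp2 := Real.sin_sq_add_cos_sq θ₂
  have expand : a ^ 2 + b ^ 2 = r₁ ^ 2 * (sin θ₁ ^ 2 + cos θ₁ ^ 2)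
      + r₂ ^ 2 * (sin θ₂ ^ 2 + cos θ₂ ^ 2)
      + 2 * r₁ * r₂ * (cos θ₁ * cos θ₂ + sin θ₁ * sin θ₂) := by
    rw [ha_def, hb_def]; ring
  rw [hp1, hp2] at expand
  have hsum_pos : 0 < a ^ 2 + b ^ 2 := by
    rw [expand]
    have := mul_nonneg (mul_nonneg (by linarith : (0:ℝ) ≤ 2 * r₁) hr2.le) hK
    nlinarith
  obtain ⟨r, hr_def⟩ : ∃ x : ℝ, x = Real.sqrt (a ^ 2 + b ^ 2) := ⟨_, rfl⟩
  have hrsq : r ^ 2 = a ^ 2 + b ^ 2 := by rw [hr_def]; exact Real.sq_sqrt hsum_pos.le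
  have hrnn : 0 ≤ r := by rw [hr_def]; exact Real.sqrt_nonneg _
  have hrpos : 0 < r := by rw [hr_def]; exact Real.sqrt_pos.2 hsum_pos
  have ha_le : a ≤ r := by
    rw [hr_def]; exact Real.le_sqrt_of_sq_le (by nlinarith [sq_nonneg b])
  have hdiv0 : 0 ≤ a / r := div_nonneg ha hrnn
  have hdiv1 : a / r ≤ 1 := (div_le_one hrpos).2 ha_le
  obtain ⟨φ, hφ_def⟩ : ∃ x : ℝ, x = Real.arccos (a / r) := ⟨_, rfl⟩
  have hcosφ : cos φ = a / r := by
    rw [hφ_def]; exact Real.cos_arccos (by linarith) hdiv1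
  have hsinφ : sin φ = b / r := by
    rw [hφ_def, Real.sin_arccos]
    have h1 : 1 - (a / r) ^ 2 = (b / r) ^ 2 := by
      rw [div_pow, div_pow]
      rw [sub_eq_iff_eq_add, ← add_div, eq_comm, div_eq_one_iff_eq (by positivity)]
      linarith
    rw [h1, Real.sqrt_sq (div_nonneg hb hrnn)]
  have hφ0 : 0 ≤ φ := by rw [hφ_def]; exact Real.arccos_nonneg _
  have hφp : φ ≤ π / 2 := by
    rw [hφ_def]
    exact Real.arccos_le_pi_div_two.2 hdiv0
  have hsin21 : 0 ≤ sin (θ₂ - θ₁) :=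
    Real.sin_nonneg_of_nonneg_of_le_pi (by linarith) (by linarith)
  have hφθ₂ : φ ≤ θ₂ := by
    by_contra h
    push_neg at h
    have hpos : 0 < sin (φ - θ₂) :=
      Real.sin_pos_of_pos_of_lt_pi (by linarith) (by linarith)
    rw [Real.sin_sub, hcosφ, hsinφ] at hpos
    have heq1 : b * cos θ₂ - a * sin θ₂ = -(r₁ * sin (θ₂ - θ₁)) := by
      rw [Real.sin_sub, ha_def, hb_def]; ring
    have hnum : b * cos θ₂ - a * sin θ₂ ≤ 0 := by
      rw [heq1]; have := mul_nonneg hr1.le hsin21; linarith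
    have hre : b / r * cos θ₂ - a / r * sin θ₂ = (b * cos θ₂ - a * sin θ₂) / r := by
      ring
    have : b / r * cos θ₂ - a / r * sin θ₂ ≤ 0 := by
      rw [hre]; exact div_nonpos_of_nonpos_of_nonneg hnum hrnn
    linarith
  have hθ₁φ : θ₁ ≤ φ := by
    by_contra h
    push_neg at h
    have hpos : 0 < sin (θ₁ - φ) :=
      Real.sin_pos_of_pos_of_lt_pi (by linarith) (by linarith)
    rw [Real.sin_sub, hcosφ, hsinφ] at hpos
    have heq1 : sin θ₁ * a - cos θ₁ * b = -(r₂ * sin (θ₂ - θ₁)) := by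
      rw [Real.sin_sub, ha_def, hb_def]; ring
    have hnum : sin θ₁ * a - cos θ₁ * b ≤ 0 := by
      rw [heq1]; have := mul_nonneg hr2.le hsin21; linarith
    have hre : sin θ₁ * (a / r) - cos θ₁ * (b / r) = (sin θ₁ * a - cos θ₁ * b) / r := by
      ring
    have : sin θ₁ * (a / r) - cos θ₁ * (b / r) ≤ 0 := by
      rw [hre]; exact div_nonpos_of_nonpos_of_nonneg hnum hrnn
    linarith
  have hip2 : r₂ ≤ a * cos θ₂ + b * sin θ₂ := by
    have expand2 : a * cos θ₂ + b * sin θ₂ =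
        r₁ * (cos θ₁ * cos θ₂ + sin θ₁ * sin θ₂) + r₂ * (sin θ₂ ^ 2 + cos θ₂ ^ 2) := by
      rw [ha_def, hb_def]; ring
    rw [expand2, hp2, mul_one]
    have := mul_nonneg hr1.le hK
    linarith
  have hr₂r : r₂ ≤ r := by
    have hCS : (a * cos θ₂ + b * sin θ₂) ^ 2 ≤ a ^ 2 + b ^ 2 := by
      have hkey : (a * cos θ₂ + b * sin θ₂) ^ 2 + (a * sin θ₂ - b * cos θ₂) ^ 2
          = (a ^ 2 + b ^ 2) * (sin θ₂ ^ 2 + cos θ₂ ^ 2) := by ring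
      rw [hp2, mul_one] at hkey
      linarith [sq_nonneg (a * sin θ₂ - b * cos θ₂)]
    have h2 : a * cos θ₂ + b * sin θ₂ ≤ r := by
      rw [hr_def]; exact Real.le_sqrt_of_sq_le hCS
    linarith
  have hip1 : r₁ ≤ a * cos θ₁ + b * sin θ₁ := by
    have expand1 : a * cos θ₁ + b * sin θ₁ =
        r₂ * (cos θ₁ * cos θ₂ + sin θ₁ * sin θ₂) + r₁ * (sin θ₁ ^ 2 + cos θ₁ ^ 2) := by
      rw [ha_def, hb_def]; ring
    rw [expand1, hp1, mul_one]
    have := mul_nonneg hr2.le hK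
    linarith
  have hr₁r : r₁ ≤ r := by
    have hCS : (a * cos θ₁ + b * sin θ₁) ^ 2 ≤ a ^ 2 + b ^ 2 := by
      have hkey : (a * cos θ₁ + b * sin θ₁) ^ 2 + (a * sin θ₁ - b * cos θ₁) ^ 2
          = (a ^ 2 + b ^ 2) * (sin θ₁ ^ 2 + cos θ₁ ^ 2) := by ring
      rw [hp1, mul_one] at hkey
      linarith [sq_nonneg (a * sin θ₁ - b * cos θ₁)]
    have h2 : a * cos θ₁ + b * sin θ₁ ≤ r := by
      rw [hr_def]; exact Real.le_sqrt_of_sq_le hCS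
    linarith
  refine ⟨φ, r, hθ₁φ, hφθ₂, hr₁r, hr₂r, ?_, ?_⟩
  · rw [← ha_def, hcosφ, mul_div_cancel₀ _ hrpos.ne']
  · rw [← hb_def, hsinφ, mul_div_cancel₀ _ hrpos.ne']


/-- Let `g : I → ℝ⁺` be monotone on an interval `I ⊆ [0, π/2]` (of length necessarily at
most `π/2`, all points in the closed first quadrant).  Then the region
`X = {λ·g(θ)·(cos θ, sin θ) : λ ≥ 1, θ ∈ I}` outside the polar graph of `g` is a
semigroup: it is closed under addition. -/
theorem stmt16 (I : Set ℝ) (hI : I ⊆ Set.Icc 0 (Real.pi / 2)) (hconn : I.OrdConnected)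
    (g : ℝ → ℝ) (hg : MonotoneOn g I ∨ AntitoneOn g I) (hgpos : ∀ θ ∈ I, 0 < g θ)
    (X : Set (ℝ × ℝ))
    (hX : X = {p : ℝ × ℝ | ∃ l θ : ℝ, 1 ≤ l ∧ θ ∈ I ∧
      p = (l * g θ * Real.cos θ, l * g θ * Real.sin θ)}) :
    ∀ x ∈ X, ∀ y ∈ X, x + y ∈ X := by
  subst hX
  have main : ∀ l₁ θ₁ l₂ θ₂ : ℝ, 1 ≤ l₁ → θ₁ ∈ I → 1 ≤ l₂ → θ₂ ∈ I → θ₁ ≤ θ₂ →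
      ∃ l θ : ℝ, 1 ≤ l ∧ θ ∈ I ∧
        (l₁ * g θ₁ * cos θ₁ + l₂ * g θ₂ * cos θ₂,
         l₁ * g θ₁ * sin θ₁ + l₂ * g θ₂ * sin θ₂) =
        ((l * g θ * cos θ, l * g θ * sin θ) : ℝ × ℝ) := by
    intro l₁ θ₁ l₂ θ₂ hl₁ hθ₁ hl₂ hθ₂ hle
    have hg1 : 0 < g θ₁ := hgpos θ₁ hθ₁
    have hg2 : 0 < g θ₂ := hgpos θ₂ hθ₂
    have hr1 : 0 < l₁ * g θ₁ := by nlinarith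
    have hr2 : 0 < l₂ * g θ₂ := by nlinarith
    obtain ⟨φ, r, hθ₁φ, hφθ₂, hr₁r, hr₂r, hcos, hsin⟩ :=
      key16 θ₁ θ₂ (l₁ * g θ₁) (l₂ * g θ₂) (hI hθ₁).1 (hI hθ₂).2 hle hr1 hr2
    have hφI : φ ∈ I := hconn.out hθ₁ hθ₂ ⟨hθ₁φ, hφθ₂⟩
    have hgφ : 0 < g φ := hgpos φ hφI
    have hgφr : g φ ≤ r := by
      rcases hg with hmono | hanti
      · have h1 : g φ ≤ g θ₂ := hmono hφI hθ₂ hφθ₂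
        have h2 : g θ₂ ≤ l₂ * g θ₂ := le_mul_of_one_le_left hg2.le hl₂
        linarith
      · have h1 : g φ ≤ g θ₁ := hanti hθ₁ hφI hθ₁φ
        have h2 : g θ₁ ≤ l₁ * g θ₁ := le_mul_of_one_le_left hg1.le hl₁
        linarith
    refine ⟨r / g φ, φ, (one_le_div hgφ).2 hgφr, hφI, ?_⟩
    rw [div_mul_cancel₀ _ hgφ.ne', hcos, hsin]
  intro x hx y hy
  obtain ⟨l₁, θ₁, hl₁, hθ₁, rfl⟩ := hx
  obtain ⟨l₂, θ₂, hl₂, hθ₂, rfl⟩ := hy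
  rcases le_total θ₁ θ₂ with h | h
  · obtain ⟨l, θ, hl, hθ, heq⟩ := main l₁ θ₁ l₂ θ₂ hl₁ hθ₁ hl₂ hθ₂ h
    exact ⟨l, θ, hl, hθ, by rw [Prod.mk_add_mk, heq]⟩
  · obtain ⟨l, θ, hl, hθ, heq⟩ := main l₂ θ₂ l₁ θ₁ hl₂ hθ₂ hl₁ hθ₁ h
    refine ⟨l, θ, hl, hθ, ?_⟩
    rw [Prod.mk_add_mk, ← heq]
    simp only [Prod.mk.injEq]
    constructor <;> ring
end
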